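/- arXiv:2105.09166 — 5 statements merged into one kernel-verified Lean document; each statement's English description precedes it below -/
import Mathlib

section
/- Let V be a 3-dimensional real vector space, let N ∈ V be nonzero, and let m be a symmetric bilinear form on V whose radical is exactly the span of N (that is, m(N,·) = 0, and m(x,·) = 0 implies x ∈ span{N}). Let T : V × V × V × V → ℝ be a 4-linear map satisfying the symmetries of a Riemann tensor: T(x,y,z,w) = −T(y,x,z,w) = −T(x,y,w,z) = T(z,w,x,y) and the first Bianchi identity T(x,y,z,w) + T(y,z,x,w) + T(z,x,y,w) = 0. Suppose moreover that T(N,y,z,w) = 0 for all y,z,w ∈ V (so that, by the symmetries, T is annihilated by N in every argument). Then there exists a scalar λ ∈ ℝ such that T(x,y,z,w) = (λ/2)·(m(x,z)·m(w,y) − m(y,z)·m(w,x)) for all x,y,z,w ∈ V. -/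
/-!
Write vectors in a basis `(N, e₁, e₂)` and let `ω(x, y) = x₁y₂ - x₂y₁` be the area form of the
last two coordinates. A bilinear form that is alternating and killed by `N` is a multiple of `ω`,
so applying this in each pair of slots gives `T = T(e₁,e₂,e₁,e₂) · ω ⊗ ω`. Expanding `m` in the
same coordinates gives `m(x,z) m(w,y) - m(y,z) m(w,x) = Δ · ω ⊗ ω`, where `Δ` is the Gram
determinant of `m` on `e₁, e₂`. Since the radical of `m` is exactly `ℝ N`, `Δ ≠ 0`, and
`λ = 2 T(e₁,e₂,e₁,e₂) / Δ` works.
-/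

open Module

section Coordinates

variable {R V : Type*} [CommRing R] [AddCommGroup V] [Module R V] (b : Basis (Fin 3) R V)

noncomputable def coordMinor (x y : V) : R := b.repr x 1 * b.repr y 2 - b.repr x 2 * b.repr y 1

theorem bilin_apply_eq_of_isOrtho_basis_zero (F : V →ₗ[R] V →ₗ[R] R)
    (hl : ∀ y, F (b 0) y = 0) (hr : ∀ x, F x (b 0) = 0) (x y : V) :
    F x y = b.repr x 1 * b.repr y 1 * F (b 1) (b 1) + b.repr x 1 * b.repr y 2 * F (b 1) (b 2)
      + b.repr x 2 * b.repr y 1 * F (b 2) (b 1) + b.repr x 2 * b.repr y 2 * F (b 2) (b 2) := by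
  conv_lhs => rw [← b.sum_repr x, ← b.sum_repr y]
  simp only [Fin.sum_univ_three, map_add, map_smul, LinearMap.add_apply, LinearMap.smul_apply,
    hl, hr, smul_eq_mul]
  ring

theorem LinearMap.IsAlt.apply_eq_mul_coordMinor {F : V →ₗ[R] V →ₗ[R] R} (hF : F.IsAlt)
    (hl : ∀ y, F (b 0) y = 0) (x y : V) :
    F x y = F (b 1) (b 2) * coordMinor b x y := by
  have hr : ∀ x, F x (b 0) = 0 := fun x => by rw [← hF.neg, hl, neg_zero]
  rw [bilin_apply_eq_of_isOrtho_basis_zero b F hl hr, hF, hF, ← hF.neg (b 1), coordMinor]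
  ring

theorem curvature_eq_mul_coordMinor (T : V →ₗ[R] V →ₗ[R] V →ₗ[R] V →ₗ[R] R)
    (hT₁₂ : ∀ x z w, T x x z w = 0) (hT₃₄ : ∀ x y z, T x y z z = 0)
    (hT₁ : ∀ y z w, T (b 0) y z w = 0) (hT₃ : ∀ x y w, T x y (b 0) w = 0) (x y z w : V) :
    T x y z w = T (b 1) (b 2) (b 1) (b 2) * coordMinor b x y * coordMinor b z w := by
  let T₁₂ : V →ₗ[R] V →ₗ[R] R :=
    T.compr₂ ((LinearMap.applyₗ (b 2)).comp (LinearMap.applyₗ (b 1)))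
  have hT₁₂_alt : T₁₂.IsAlt := fun x => by simp [T₁₂, hT₁₂]
  rw [LinearMap.IsAlt.apply_eq_mul_coordMinor b (F := T x y) (hT₃₄ x y) (hT₃ x y),
    show T x y (b 1) (b 2) = T₁₂ x y from rfl,
    hT₁₂_alt.apply_eq_mul_coordMinor b (fun y => by simp [T₁₂, hT₁])]
  rfl

theorem mul_sub_mul_eq_gramDet_mul_coordMinor (m : V →ₗ[R] V →ₗ[R] R)
    (hm : ∀ x y, m x y = m y x) (hl : ∀ y, m (b 0) y = 0) (x y z w : V) :
    m x z * m w y - m y z * m w x =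
      (m (b 1) (b 1) * m (b 2) (b 2) - m (b 1) (b 2) ^ 2) * coordMinor b x y * coordMinor b z w := by
  have hr : ∀ x, m x (b 0) = 0 := fun x => by rw [hm, hl]
  have expand := bilin_apply_eq_of_isOrtho_basis_zero b m hl hr
  rw [expand x z, expand w y, expand y z, expand w x, hm (b 2) (b 1), coordMinor, coordMinor]
  ring

end Coordinates

section Field

variable {K V : Type*} [Field K] [AddCommGroup V] [Module K V]

theorem gram_det_ne_zero_of_radical_le_span (b : Basis (Fin 3) K V) (m : V →ₗ[K] V →ₗ[K] K)
    (hm : ∀ x y, m x y = m y x) (hl : ∀ y, m (b 0) y = 0)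
    (hrad : ∀ x, (∀ y, m x y = 0) → x ∈ K ∙ b 0) :
    m (b 1) (b 1) * m (b 2) (b 2) - m (b 1) (b 2) ^ 2 ≠ 0 := by
  intro hΔ
  obtain ⟨c, hc, hGc⟩ := Matrix.exists_mulVec_eq_zero_iff.mpr
    (show (!![m (b 1) (b 1), m (b 1) (b 2); m (b 1) (b 2), m (b 2) (b 2)]).det = 0 by
      rw [Matrix.det_fin_two_of, ← hΔ]; ring)
  have hGc₀ := congrFun hGc 0
  have hGc₁ := congrFun hGc 1
  simp only [Matrix.mulVec, dotProduct, Matrix.of_apply, Matrix.cons_val', Matrix.cons_val_fin_one,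
    Matrix.cons_val_zero, Matrix.cons_val_one, Fin.sum_univ_two, Pi.zero_apply] at hGc₀ hGc₁
  have hv : m (c 0 • b 1 + c 1 • b 2) = 0 := b.ext fun i => by
    fin_cases i <;> simp only [Fin.zero_eta, Fin.mk_one, Fin.reduceFinMk, map_add, map_smul,
      LinearMap.add_apply, LinearMap.smul_apply, smul_eq_mul, LinearMap.zero_apply]
    · simp only [hm _ (b 0), hl, mul_zero, add_zero]
    · linear_combination hGc₀ + c 1 * hm (b 2) (b 1)
    · linear_combination hGc₁
  obtain ⟨t, ht⟩ := Submodule.mem_span_singleton.mp (hrad _ fun y => by rw [hv]; rfl)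
  apply hc
  have hrepr := congrArg b.repr ht
  ext i; fin_cases i
  · simpa using (congrArg (· 1) hrepr).symm
  · simpa using (congrArg (· 2) hrepr).symm

theorem exists_basis_fin_three_zero_eq (hdim : finrank K V = 3) {N : V} (hN : N ≠ 0) :
    ∃ b : Basis (Fin 3) K V, b 0 = N := by
  obtain ⟨y, hy⟩ := exists_linearIndependent_pair_of_one_lt_finrank (R := K) (by omega) hN
  obtain ⟨z, hz⟩ := exists_linearIndependent_snoc_of_lt_finrank hy (by omega)
  refine ⟨basisOfLinearIndependentOfCardEqFinrank hz (by simp [hdim]), ?_⟩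
  rw [coe_basisOfLinearIndependentOfCardEqFinrank]
  rfl

end Field

theorem stmt0_general (V : Type*) [AddCommGroup V] [Module ℝ V]
    (hdim : Module.finrank ℝ V = 3)
    (N : V) (hN : N ≠ 0)
    (m : V →ₗ[ℝ] V →ₗ[ℝ] ℝ)
    (hmsym : ∀ x y : V, m x y = m y x)
    (hmN : ∀ y : V, m N y = 0)
    (hrad : ∀ x : V, (∀ y : V, m x y = 0) → x ∈ Submodule.span ℝ ({N} : Set V))
    (T : V →ₗ[ℝ] V →ₗ[ℝ] V →ₗ[ℝ] V →ₗ[ℝ] ℝ)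
    (hT1 : ∀ x y z w : V, T x y z w = - T y x z w)
    (hT2 : ∀ x y z w : V, T x y z w = - T x y w z)
    (hT3 : ∀ x y z w : V, T x y z w = T z w x y)
    (hTN : ∀ y z w : V, T N y z w = 0) :
    ∃ lam : ℝ, ∀ x y z w : V,
      T x y z w = (lam / 2) * (m x z * m w y - m y z * m w x) := by
  obtain ⟨b, rfl⟩ := exists_basis_fin_three_zero_eq hdim hN
  have hΔ := gram_det_ne_zero_of_radical_le_span b m hmsym hmN hrad
  refine ⟨2 * T (b 1) (b 2) (b 1) (b 2) / (m (b 1) (b 1) * m (b 2) (b 2) - m (b 1) (b 2) ^ 2),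
    fun x y z w => ?_⟩
  have hT₁₂ : ∀ x z w, T x x z w = 0 := fun x z w => by linarith [hT1 x x z w]
  have hT₃₄ : ∀ x y z, T x y z z = 0 := fun x y z => by linarith [hT2 x y z z]
  have hT₃ : ∀ x y w, T x y (b 0) w = 0 := fun x y w => by rw [hT3, hTN]
  rw [curvature_eq_mul_coordMinor b T hT₁₂ hT₃₄ hTN hT₃,
    mul_sub_mul_eq_gramDet_mul_coordMinor b m hmsym hmN]
  field_simp

/-- A 4-linear map on a 3-dimensional real vector space with all the
symmetries of a Riemann tensor, annihilated by the degeneration vector `N` of a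
symmetric bilinear form `m` whose radical is exactly the span of `N`, must be
proportional to `(1/2)·(m x z · m w y − m y z · m w x)`. -/
theorem stmt0 (V : Type*) [AddCommGroup V] [Module ℝ V]
    (hdim : Module.finrank ℝ V = 3)
    (N : V) (hN : N ≠ 0)
    (m : V →ₗ[ℝ] V →ₗ[ℝ] ℝ)
    (hmsym : ∀ x y : V, m x y = m y x)
    (hmN : ∀ y : V, m N y = 0)
    (hrad : ∀ x : V, (∀ y : V, m x y = 0) → x ∈ Submodule.span ℝ ({N} : Set V))
    (T : V →ₗ[ℝ] V →ₗ[ℝ] V →ₗ[ℝ] V →ₗ[ℝ] ℝ)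
    (hT1 : ∀ x y z w : V, T x y z w = - T y x z w)
    (hT2 : ∀ x y z w : V, T x y z w = - T x y w z)
    (hT3 : ∀ x y z w : V, T x y z w = T z w x y)
    (hBianchi : ∀ x y z w : V, T x y z w + T y z x w + T z x y w = 0)
    (hTN : ∀ y z w : V, T N y z w = 0) :
    ∃ lam : ℝ, ∀ x y z w : V,
      T x y z w = (lam / 2) * (m x z * m w y - m y z * m w x) :=
  stmt0_general V hdim N hN m hmsym hmN hrad T hT1 hT2 hT3 hTN
end

section
/- Let V be a finite-dimensional real vector space, let N ∈ V be nonzero, and let m be a symmetric bilinear form on V whose radical is exactly the span of N. Regard m as a linear map m♭ : V → V* by m♭(x) = m(x,·). Then: (i) there exists a symmetric bilinear form h on V* such that, with h♯ : V* → V the induced map, m♭ ∘ h♯ ∘ m♭ = m♭; and (ii) if h and h' are two symmetric bilinear forms on V* both satisfying this condition, then there exists v ∈ V such that h'(α,β) − h(α,β) = α(N)·β(v) + β(N)·α(v) for all α,β ∈ V*. -/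
/-!
Inverting `m` on a complement of its radical `ker m` gives a symmetric `h` with
`m♭ ∘ h♯ ∘ m♭ = m♭`. Any such `h` satisfies `h (m x) (m y) = m x y`, so the difference of two
of them vanishes on `range m × range m`. Since `m` is symmetric, `range m` is the annihilator of
`ker m ⊆ ℝ ∙ N`, hence contains every `α` with `α N = 0`; and a symmetric form vanishing on
`ker ℓ × ker ℓ` is `ℓ ⊗ u + u ⊗ ℓ` for some functional `u`.
-/

open Module LinearMap

namespace LinearMap

theorem exists_eq_mul_add_mul_of_eq_zero_on_ker {K W : Type*} [Field K] [NeZero (2 : K)]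
    [AddCommGroup W] [Module K W] (ℓ : Dual K W) (D : W →ₗ[K] W →ₗ[K] K)
    (hD : ∀ a b, D a b = D b a) (hker : ∀ a b, ℓ a = 0 → ℓ b = 0 → D a b = 0) :
    ∃ u : Dual K W, ∀ a b, D a b = ℓ a * u b + ℓ b * u a := by
  by_cases hℓ : ℓ = 0
  · exact ⟨0, fun a b => by simp [hker a b (by simp [hℓ]) (by simp [hℓ])]⟩
  obtain ⟨ξ, hξ⟩ := LinearMap.surjective hℓ 1
  refine ⟨D ξ - (2⁻¹ * D ξ ξ) • ℓ, fun a b => ?_⟩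
  -- expand `D` at the components `a - ℓ a • ξ`, `b - ℓ b • ξ` of `a`, `b` in `ker ℓ`
  have key := hker (a - ℓ a • ξ) (b - ℓ b • ξ) (by simp [hξ]) (by simp [hξ])
  simp only [map_sub, map_smul, sub_apply, smul_apply, smul_eq_mul, hD a ξ] at key ⊢
  linear_combination (norm := (field_simp; ring_nf)) key

variable {K V : Type*} [Field K] [AddCommGroup V] [Module K V] [FiniteDimensional K V]
  {m : V →ₗ[K] V →ₗ[K] K}

theorem range_eq_dualAnnihilator_ker_of_symm (hm : ∀ x y, m x y = m y x) :
    range m = (ker m).dualAnnihilator := by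
  have hflip : m = m.dualMap ∘ₗ (evalEquiv K V).toLinearMap := by
    ext x y
    exact hm x y
  rw [← range_dualMap_eq_dualAnnihilator_ker]
  nth_rw 1 [hflip]
  exact range_comp_of_range_eq_top _ (LinearEquiv.range _)

theorem mem_range_of_ker_le_span (hm : ∀ x y, m x y = m y x) {N : V} (hker : ker m ≤ K ∙ N)
    {α : Dual K V} (hα : α N = 0) : α ∈ range m := by
  rw [range_eq_dualAnnihilator_ker_of_symm hm]
  refine Submodule.dualAnnihilator_anti hker ?_
  simp [Submodule.mem_dualAnnihilator, Submodule.mem_span_singleton, hα]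

theorem exists_symm_generalizedInverse (hm : ∀ x y, m x y = m y x) :
    ∃ S : Dual K V →ₗ[K] V, (∀ α β : Dual K V, β (S α) = α (S β)) ∧ ∀ x, m (S (m x)) = m x := by
  obtain ⟨W, hW⟩ := Submodule.exists_isCompl (ker m)
  have hker : ∀ x, ∀ z ∈ ker m, m x z = 0 := fun x z hz => by
    rw [hm, mem_ker.mp hz, zero_apply]
  let f : W →ₗ[K] Dual K W := W.subtype.dualMap ∘ₗ m ∘ₗ W.subtype
  have hf : Function.Injective f := by
    rw [← ker_eq_bot, ker_eq_bot']
    intro w hw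
    have hmw : m w = 0 := ext_on_codisjoint hW.codisjoint (fun z hz => hker w z hz)
      (fun z hz => congr($hw ⟨z, hz⟩))
    exact Subtype.ext (hW.disjoint.le_bot ⟨mem_ker.mpr hmw, w.2⟩)
  let e := f.linearEquivOfInjective hf Subspace.dual_finrank_eq.symm
  let S := W.subtype ∘ₗ e.symm.toLinearMap ∘ₗ W.subtype.dualMap
  have hSW : ∀ β, S β ∈ W := fun β => (e.symm (W.subtype.dualMap β)).2
  have hS : ∀ β, ∀ w ∈ W, m (S β) w = β w := fun β w hw =>
    congr($(e.apply_symm_apply (W.subtype.dualMap β)) ⟨w, hw⟩)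
  refine ⟨S, fun α β => ?_, fun x => ?_⟩
  · rw [← hS β _ (hSW α), hm, hS α _ (hSW β)]
  · exact ext_on_codisjoint hW.codisjoint (fun z hz => by simp only [hker _ z hz])
      (fun z hz => hS (m x) z hz)

theorem apply_apply_eq_of_generalizedInverse (hm : ∀ x y, m x y = m y x)
    {h : Dual K V →ₗ[K] Dual K V →ₗ[K] K}
    (hh : ∀ x, m ((evalEquiv K V).symm (h (m x))) = m x) (x y : V) :
    h (m x) (m y) = m x y := by
  rw [← apply_evalEquiv_symm_apply, hm, hh]

end LinearMap

theorem stmt1_general (V : Type*) [AddCommGroup V] [Module ℝ V] [FiniteDimensional ℝ V]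
    (N : V)
    (m : V →ₗ[ℝ] V →ₗ[ℝ] ℝ)
    (hmsym : ∀ x y : V, m x y = m y x)
    (hrad : ∀ x : V, (∀ y : V, m x y = 0) → x ∈ Submodule.span ℝ ({N} : Set V)) :
    (∃ h : Dual ℝ V →ₗ[ℝ] Dual ℝ V →ₗ[ℝ] ℝ,
      (∀ α β : Dual ℝ V, h α β = h β α) ∧
      ∀ x : V, m ((evalEquiv ℝ V).symm (h (m x))) = m x) ∧
    (∀ h h' : Dual ℝ V →ₗ[ℝ] Dual ℝ V →ₗ[ℝ] ℝ,
      (∀ α β : Dual ℝ V, h α β = h β α) →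
      (∀ α β : Dual ℝ V, h' α β = h' β α) →
      (∀ x : V, m ((evalEquiv ℝ V).symm (h (m x))) = m x) →
      (∀ x : V, m ((evalEquiv ℝ V).symm (h' (m x))) = m x) →
      ∃ v : V, ∀ α β : Dual ℝ V, h' α β - h α β = α N * β v + β N * α v) := by
  refine ⟨?_, fun h h' hsymm hsymm' hinv hinv' => ?_⟩
  · obtain ⟨S, hSsymm, hS⟩ := exists_symm_generalizedInverse hmsym
    exact ⟨(evalEquiv ℝ V).toLinearMap ∘ₗ S, hSsymm, fun x => by
      simp only [comp_apply, LinearEquiv.coe_coe, LinearEquiv.symm_apply_apply, hS]⟩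
  have hker : ker m ≤ ℝ ∙ N := fun x hx => hrad x fun y => by simp [mem_ker.mp hx]
  have hdiff : ∀ α β : Dual ℝ V, α N = 0 → β N = 0 → (h' - h) α β = 0 := by
    intro α β hα hβ
    obtain ⟨x, rfl⟩ := mem_range_of_ker_le_span hmsym hker hα
    obtain ⟨y, rfl⟩ := mem_range_of_ker_le_span hmsym hker hβ
    simp [apply_apply_eq_of_generalizedInverse hmsym hinv,
      apply_apply_eq_of_generalizedInverse hmsym hinv']
  obtain ⟨u, hu⟩ := exists_eq_mul_add_mul_of_eq_zero_on_ker (Dual.eval ℝ V N) (h' - h)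
    (fun α β => by simp [hsymm α β, hsymm' α β]) hdiff
  exact ⟨(evalEquiv ℝ V).symm u, fun α β => by simpa using hu α β⟩

/-- existence of an "inverse" `h` of a degenerate symmetric bilinear
form `m` with radical spanned by `N ≠ 0` (in the sense `m♭ ∘ h♯ ∘ m♭ = m♭`), and
the freedom in its choice is exactly addition of `α(N)β(v) + β(N)α(v)`. -/
theorem stmt1 (V : Type*) [AddCommGroup V] [Module ℝ V] [FiniteDimensional ℝ V]
    (N : V) (hN : N ≠ 0)
    (m : V →ₗ[ℝ] V →ₗ[ℝ] ℝ)
    (hmsym : ∀ x y : V, m x y = m y x)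
    (hmN : ∀ y : V, m N y = 0)
    (hrad : ∀ x : V, (∀ y : V, m x y = 0) → x ∈ Submodule.span ℝ ({N} : Set V)) :
    (∃ h : Dual ℝ V →ₗ[ℝ] Dual ℝ V →ₗ[ℝ] ℝ,
      (∀ α β : Dual ℝ V, h α β = h β α) ∧
      ∀ x : V, m ((evalEquiv ℝ V).symm (h (m x))) = m x) ∧
    (∀ h h' : Dual ℝ V →ₗ[ℝ] Dual ℝ V →ₗ[ℝ] ℝ,
      (∀ α β : Dual ℝ V, h α β = h β α) →
      (∀ α β : Dual ℝ V, h' α β = h' β α) →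
      (∀ x : V, m ((evalEquiv ℝ V).symm (h (m x))) = m x) →
      (∀ x : V, m ((evalEquiv ℝ V).symm (h' (m x))) = m x) →
      ∃ v : V, ∀ α β : Dual ℝ V, h' α β - h α β = α N * β v + β N * α v) :=
  stmt1_general V N m hmsym hrad
end

section
/- Let V be a 4-dimensional real vector space and g a nondegenerate symmetric bilinear form on V of Lorentzian signature. Let W : V × V × V × V → ℝ be a Weyl candidate: a 4-linear map satisfying W(x,y,z,w) = −W(y,x,z,w) = −W(x,y,w,z) = W(z,w,x,y), the first Bianchi identity W(x,y,z,w) + W(y,z,x,w) + W(z,x,y,w) = 0, and vanishing g-traces (for any basis (e_i) of V with inverse-metric coefficients g^{ij}, ∑_{i,j} g^{ij} W(e_i, x, e_j, y) = 0 for all x,y ∈ V). Let N ∈ V be null and nonzero, let ℓ ∈ V be null with g(N,ℓ) = −1, and let Σ := {x ∈ V : g(x,N) = 0 = g(x,ℓ)}. If W(x,y,z,N) = 0 for all x,y,z ∈ V, then W(u,v,w,ℓ) = 0 for all u,v,w ∈ Σ. -/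
/-!
Since `W` is annihilated by `N` in its last slot, its pair symmetries make it vanish whenever `N`
occupies any slot. If `u, v ∈ Σ` are linearly independent, `(N, ℓ, u, v)` is a basis whose Gram
matrix is block diagonal, `[[0, -1], [-1, 0]] ⊕ h` with `h` the Gram matrix of `(u, v)`; it is
invertible because `g` is nondegenerate, hence so is `h`. In the trace condition for this basis
every term involving `N` drops out, and what remains for `x = v` and `x = u` is the linear system
`h⁻¹ (W(u,v,u,ℓ), W(u,v,v,ℓ)) = 0`. So `W(u,v,·,ℓ)` vanishes on `u`, `v`, on `N` and on `ℓ`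
(antisymmetry of the last pair), i.e. on a basis. If `u, v` are dependent, `W(u,v,·,·) = 0`
because `W` is alternating in its first pair.
-/

open Matrix Module

section Alternating

variable {𝕜 V M : Type*} [Field 𝕜] [AddCommGroup V] [Module 𝕜 V] [AddCommMonoid M] [Module 𝕜 M]

theorem LinearMap.IsAlt.apply_eq_zero_of_not_linearIndependent {B : V →ₗ[𝕜] V →ₗ[𝕜] M}
    (hB : B.IsAlt) {u v : V} (huv : ¬LinearIndependent 𝕜 ![u, v]) : B u v = 0 := by
  rw [LinearIndependent.pair_iff] at huv
  push Not at huv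
  obtain ⟨s, t, hst, hne⟩ := huv
  have hs : s • B u v = 0 := by simpa [hB v] using congrArg (B · v) hst
  have ht : t • B u v = 0 := by simpa [hB u] using congrArg (B u) hst
  by_cases hs0 : s = 0
  · exact (smul_eq_zero.mp ht).resolve_left (hne hs0)
  · exact (smul_eq_zero.mp hs).resolve_left hs0

end Alternating

section NullFrameGram

variable {R : Type*} [CommRing R]

theorem det_nullFrameGram (a e c : R) :
    det !![0, -1, 0, 0; -1, 0, 0, 0; 0, 0, a, e; 0, 0, e, c] = -(a * c - e ^ 2) := by
  simp [det_succ_row_zero, Fin.sum_univ_succ, Fin.succAbove, Fin.ext_iff]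
  ring

theorem inv_nullFrameGram {K : Type*} [Field K] {a e c : K} (hd : a * c - e ^ 2 ≠ 0) :
    (!![0, -1, 0, 0; -1, 0, 0, 0; 0, 0, a, e; 0, 0, e, c])⁻¹ =
      !![0, -1, 0, 0; -1, 0, 0, 0; 0, 0, c / (a * c - e ^ 2), -e / (a * c - e ^ 2);
        0, 0, -e / (a * c - e ^ 2), a / (a * c - e ^ 2)] := by
  refine inv_eq_right_inv ?_
  ext i j
  fin_cases i <;> fin_cases j <;> simp [mul_apply, Fin.sum_univ_four] <;> field_simp <;> ring

variable {V : Type*} [AddCommGroup V] [Module R V] {N l u v : V}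

theorem sum_nullFrameGram_mul_apply {W : V →ₗ[R] V →ₗ[R] V →ₗ[R] V →ₗ[R] R}
    (hN₁ : ∀ x y z, W N x y z = 0) (hN₃ : ∀ x y z, W x y N z = 0) (p q r : R) (x y : V) :
    ∑ i : Fin 4, ∑ j : Fin 4, !![0, -1, 0, 0; -1, 0, 0, 0; 0, 0, p, q; 0, 0, q, r] i j *
        W (![N, l, u, v] i) x (![N, l, u, v] j) y =
      p * W u x u y + q * W u x v y + q * W v x u y + r * W v x v y := by
  simp [Fin.sum_univ_four, hN₁, hN₃]
  ring

theorem gram_nullFrame {g : V →ₗ[R] V →ₗ[R] R} (hg : ∀ x y, g x y = g y x)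
    (hNN : g N N = 0) (hll : g l l = 0) (hNl : g N l = -1)
    (hu : g u N = 0) (hul : g u l = 0) (hv : g v N = 0) (hvl : g v l = 0) :
    Matrix.of (fun i j : Fin 4 => g (![N, l, u, v] i) (![N, l, u, v] j)) =
      !![0, -1, 0, 0; -1, 0, 0, 0; 0, 0, g u u, g u v; 0, 0, g u v, g v v] := by
  ext i j
  fin_cases i <;> fin_cases j <;> simp [hNN, hll, hNl, hu, hul, hv, hvl, hg N, hg l, hg v u]

end NullFrameGram

section NullFrame

variable {𝕜 V : Type*} [Field 𝕜] [AddCommGroup V] [Module 𝕜 V] {g : V →ₗ[𝕜] V →ₗ[𝕜] 𝕜}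
  {N l u v : V}

theorem LinearMap.SeparatingLeft.det_gram_ne_zero {ι : Type*} [Fintype ι] [DecidableEq ι]
    (hg : g.SeparatingLeft) (b : Basis ι 𝕜 V) : det (Matrix.of fun i j => g (b i) (b j)) ≠ 0 := by
  have hM : LinearMap.toMatrix₂ b b g = Matrix.of fun i j => g (b i) (b j) := by
    ext i j; exact LinearMap.toMatrix₂_apply b b g i j
  exact hM ▸ (LinearMap.separatingLeft_iff_det_ne_zero b).mp hg

theorem linearIndependent_nullFrame (hg : ∀ x y, g x y = g y x)
    (hNN : g N N = 0) (hll : g l l = 0) (hNl : g N l = -1)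
    (hu : g u N = 0) (hul : g u l = 0) (hv : g v N = 0) (hvl : g v l = 0)
    (huv : LinearIndependent 𝕜 ![u, v]) : LinearIndependent 𝕜 ![N, l, u, v] := by
  rw [Fintype.linearIndependent_iff]
  intro c hc
  simp only [Fin.sum_univ_four, Matrix.cons_val] at hc
  have h1 : c 1 = 0 := by simpa [hNN, hu, hv, hg l N, hNl] using congrArg (g · N) hc
  have h0 : c 0 = 0 := by simpa [hNl, hll, hul, hvl] using congrArg (g · l) hc
  have h23 := LinearIndependent.pair_iff.mp huv (c 2) (c 3) (by simpa [h0, h1] using hc)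
  intro i
  fin_cases i <;> simp [h0, h1, h23.1, h23.2]

end NullFrame

section WeylCandidate

variable {𝕜 V : Type*} [Field 𝕜] [AddCommGroup V] [Module 𝕜 V] {g : V →ₗ[𝕜] V →ₗ[𝕜] 𝕜}
  {W : V →ₗ[𝕜] V →ₗ[𝕜] V →ₗ[𝕜] V →ₗ[𝕜] 𝕜} {N l u v : V}

theorem weyl_apply_eq_zero_of_linearIndependent (hdim : finrank 𝕜 V = 4)
    (hg : ∀ x y, g x y = g y x) (hgnd : g.SeparatingLeft)
    (hW₁₂ : W.IsAlt) (hW₃₄ : ∀ x y, (W x y).IsAlt)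
    (htrace : ∀ (b : Basis (Fin 4) 𝕜 V) (x y : V),
      ∑ i : Fin 4, ∑ j : Fin 4,
        (Matrix.of fun i j : Fin 4 => g (b i) (b j))⁻¹ i j * W (b i) x (b j) y = 0)
    (hNN : g N N = 0) (hll : g l l = 0) (hNl : g N l = -1)
    (hN₁ : ∀ x y z, W N x y z = 0) (hN₃ : ∀ x y z, W x y N z = 0)
    (hu : g u N = 0) (hul : g u l = 0) (hv : g v N = 0) (hvl : g v l = 0)
    (huv : LinearIndependent 𝕜 ![u, v]) (w : V) : W u v w l = 0 := by
  have hli := linearIndependent_nullFrame hg hNN hll hNl hu hul hv hvl huv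
  have hcard : Fintype.card (Fin 4) = finrank 𝕜 V := by simp [hdim]
  set b := basisOfLinearIndependentOfCardEqFinrank hli hcard
  have hb : ⇑b = ![N, l, u, v] := coe_basisOfLinearIndependentOfCardEqFinrank hli hcard
  have hG := gram_nullFrame hg hNN hll hNl hu hul hv hvl
  have hd : g u u * g v v - g u v ^ 2 ≠ 0 := by
    have hdet := hgnd.det_gram_ne_zero b
    rwa [hb, hG, det_nullFrameGram, neg_ne_zero] at hdet
  have h₁ := htrace b v l
  have h₂ := htrace b u l
  rw [hb, hG, inv_nullFrameGram hd, sum_nullFrameGram_mul_apply hN₁ hN₃] at h₁ h₂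
  have hvu : W v u = -W u v := (LinearMap.IsAlt.neg (M := V →ₗ[𝕜] V →ₗ[𝕜] 𝕜) hW₁₂ u v).symm
  simp only [hW₁₂ u, hW₁₂ v, hvu, LinearMap.neg_apply, LinearMap.zero_apply, mul_zero,
    add_zero, mul_neg] at h₁ h₂
  set d := g u u * g v v - g u v ^ 2
  field_simp at h₁ h₂
  have hP : W u v u l = 0 :=
    (mul_eq_zero.mp (by linear_combination g u u * h₁ - g u v * h₂)).resolve_left hd
  have hQ : W u v v l = 0 :=
    (mul_eq_zero.mp (by linear_combination g u v * h₁ - g v v * h₂)).resolve_left hd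
  have hWuv : (W u v).flip l = 0 := b.ext fun i => by
    fin_cases i <;> simp [hb, hN₃, hW₃₄ u v l, hP, hQ]
  exact LinearMap.congr_fun hWuv w

end WeylCandidate

theorem stmt5_general (V : Type*) [AddCommGroup V] [Module ℝ V]
    (hdim : Module.finrank ℝ V = 4)
    (g : V →ₗ[ℝ] V →ₗ[ℝ] ℝ)
    (hgsym : ∀ x y : V, g x y = g y x)
    (hgnd : ∀ x : V, (∀ y : V, g x y = 0) → x = 0)
    (W : V →ₗ[ℝ] V →ₗ[ℝ] V →ₗ[ℝ] V →ₗ[ℝ] ℝ)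
    (hW1 : ∀ x y z w : V, W x y z w = - W y x z w)
    (hW2 : ∀ x y z w : V, W x y z w = - W x y w z)
    (hW3 : ∀ x y z w : V, W x y z w = W z w x y)
    (htrace : ∀ (b : Module.Basis (Fin 4) ℝ V) (x y : V),
      ∑ i : Fin 4, ∑ j : Fin 4,
        (Matrix.of fun i j : Fin 4 => g (b i) (b j))⁻¹ i j * W (b i) x (b j) y = 0)
    (N : V) (hNnull : g N N = 0)
    (l : V) (hlnull : g l l = 0) (hNl : g N l = -1)
    (hWN : ∀ x y z : V, W x y z N = 0) :
    ∀ u v w : V, g u N = 0 → g u l = 0 → g v N = 0 → g v l = 0 →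
      g w N = 0 → g w l = 0 → W u v w l = 0 := by
  have hW₁₂ : W.IsAlt := fun x => by
    ext y z
    rw [LinearMap.zero_apply, LinearMap.zero_apply]
    linarith [hW1 x x y z]
  have hW₃₄ (x y : V) : (W x y).IsAlt := fun z => by linarith [hW2 x y z z]
  have hN₁ (x y z : V) : W N x y z = 0 := by rw [hW3, hW2, hWN, neg_zero]
  have hN₃ (x y z : V) : W x y N z = 0 := by rw [hW3, hN₁]
  intro u v w hu hul hv hvl _ _
  by_cases huv : LinearIndependent ℝ ![u, v]
  · exact weyl_apply_eq_zero_of_linearIndependent hdim hgsym hgnd hW₁₂ hW₃₄ htrace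
      hNnull hlnull hNl hN₁ hN₃ hu hul hv hvl huv w
  · rw [hW₁₂.apply_eq_zero_of_not_linearIndependent huv, LinearMap.zero_apply,
      LinearMap.zero_apply]

/-- for a Weyl candidate `W` on a 4-dimensional Lorentzian vector space
annihilated by a nonzero null vector `N` in its last slot, all components
`W(u,v,w,ℓ)` with `u,v,w` in the spacelike plane `Σ` orthogonal to `N` and to a
transverse null vector `ℓ` (normalized by `g(N,ℓ) = −1`) vanish. -/
theorem stmt5 (V : Type*) [AddCommGroup V] [Module ℝ V]
    (hdim : Module.finrank ℝ V = 4)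
    (g : V →ₗ[ℝ] V →ₗ[ℝ] ℝ)
    (hgsym : ∀ x y : V, g x y = g y x)
    (hgnd : ∀ x : V, (∀ y : V, g x y = 0) → x = 0)
    (hlor : ∃ b : Module.Basis (Fin 4) ℝ V, ∀ i j : Fin 4,
      g (b i) (b j) = if i = j then (if i = 0 then (-1 : ℝ) else 1) else 0)
    (W : V →ₗ[ℝ] V →ₗ[ℝ] V →ₗ[ℝ] V →ₗ[ℝ] ℝ)
    (hW1 : ∀ x y z w : V, W x y z w = - W y x z w)
    (hW2 : ∀ x y z w : V, W x y z w = - W x y w z)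
    (hW3 : ∀ x y z w : V, W x y z w = W z w x y)
    (hBianchi : ∀ x y z w : V, W x y z w + W y z x w + W z x y w = 0)
    (htrace : ∀ (b : Module.Basis (Fin 4) ℝ V) (x y : V),
      ∑ i : Fin 4, ∑ j : Fin 4,
        (Matrix.of fun i j : Fin 4 => g (b i) (b j))⁻¹ i j * W (b i) x (b j) y = 0)
    (N : V) (hNnull : g N N = 0) (hN0 : N ≠ 0)
    (l : V) (hlnull : g l l = 0) (hNl : g N l = -1)
    (hWN : ∀ x y z : V, W x y z N = 0) :
    ∀ u v w : V, g u N = 0 → g u l = 0 → g v N = 0 → g v l = 0 →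
      g w N = 0 → g w l = 0 → W u v w l = 0 :=
  stmt5_general V hdim g hgsym hgnd W hW1 hW2 hW3 htrace N hNnull l hlnull hNl hWN
end

section
/- Let V be a 4-dimensional real vector space and g a nondegenerate symmetric bilinear form on V of Lorentzian signature. Let W : V × V × V × V → ℝ be a Weyl candidate: a 4-linear map satisfying W(x,y,z,w) = −W(y,x,z,w) = −W(x,y,w,z) = W(z,w,x,y), the first Bianchi identity W(x,y,z,w) + W(y,z,x,w) + W(z,x,y,w) = 0, and vanishing g-traces (for any basis (e_i) of V with inverse-metric coefficients g^{ij}, ∑_{i,j} g^{ij} W(e_i, x, e_j, y) = 0 for all x,y ∈ V). Let N ∈ V be null and nonzero, let ℓ ∈ V be null with g(N,ℓ) = −1, and let Σ := {x ∈ V : g(x,N) = 0 = g(x,ℓ)}. Assume W(x,y,z,N) = 0 for all x,y,z ∈ V. If, in addition, W(ℓ,x,ℓ,y) = 0 for all x,y ∈ Σ, then W = 0 identically. -/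
/-!
Complete `N, ℓ` to a basis `(N, ℓ, e₁, e₂)` with `e₁, e₂` a `g`-orthogonal basis of `Σ`. Its Gram
matrix is `[[0, -1], [-1, 0]] ⊕ diag(a, d)` with `a, d ≠ 0` by nondegeneracy, so its inverse is
`[[0, -1], [-1, 0]] ⊕ diag(a⁻¹, d⁻¹)`. As `N` lies in every slot's kernel of `W`, the trace condition
reduces to `a⁻¹ W(e₁,x,e₁,y) + d⁻¹ W(e₂,x,e₂,y) = 0`, and the only components left are those on
the bivectors `ℓ∧e₁, ℓ∧e₂, e₁∧e₂`: the three `W(ℓ,eᵢ,ℓ,eⱼ)` vanish by hypothesis, and the trace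
identity at `(x, y) = (e₂, ℓ), (e₁, ℓ), (e₂, e₂)` kills the other three.
-/

open Module

namespace LinearMap

theorem IsAlt.eq_zero_of_apply_basis_lt {R M P ι : Type*} [CommRing R] [AddCommGroup M]
    [Module R M] [AddCommGroup P] [Module R P] [LinearOrder ι] (b : Basis ι R M)
    {f : M →ₗ[R] M →ₗ[R] P} (hf : f.IsAlt) (h : ∀ i j, i < j → f (b i) (b j) = 0) : f = 0 := by
  refine b.ext fun i => b.ext fun j => ?_
  rcases lt_trichotomy i j with hij | rfl | hji
  · exact h i j hij
  · exact hf (b i)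
  · rw [← hf.neg, h j i hji, neg_zero]
    rfl

end LinearMap

section Frame

variable {K : Type*} [Field K]

def nullFrameGram (a d : K) : Matrix (Fin 4) (Fin 4) K :=
  !![0, -1, 0, 0; -1, 0, 0, 0; 0, 0, a, 0; 0, 0, 0, d]

theorem nullFrameGram_inv {a d : K} (ha : a ≠ 0) (hd : d ≠ 0) :
    (nullFrameGram a d)⁻¹ = nullFrameGram a⁻¹ d⁻¹ := by
  refine Matrix.inv_eq_right_inv ?_
  ext i j
  fin_cases i <;> fin_cases j <;> simp [nullFrameGram, Matrix.mul_apply, Fin.sum_univ_four, ha, hd]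

variable {V : Type*} [AddCommGroup V] [Module K V] {g : LinearMap.BilinForm K V}

theorem exists_orthogonal_pair_orthogonal_to [Invertible (2 : K)]
    (hg : ∀ x y, g x y = g y x) (hdim : 4 ≤ finrank K V) (N l : V) :
    ∃ e : Fin 2 → V, LinearIndependent K e ∧ (∀ i, g (e i) N = 0 ∧ g (e i) l = 0) ∧
      g (e 0) (e 1) = 0 := by
  have : FiniteDimensional K V := .of_finrank_pos (by omega)
  have hS : 2 ≤ finrank K (LinearMap.ker ((g.flip N).prod (g.flip l))) := by
    have := ((g.flip N).prod (g.flip l)).finrank_range_add_finrank_ker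
    have := (LinearMap.range ((g.flip N).prod (g.flip l))).finrank_le
    simp only [finrank_prod, finrank_self] at this
    omega
  set S := LinearMap.ker ((g.flip N).prod (g.flip l))
  obtain ⟨v, hv⟩ := LinearMap.BilinForm.exists_orthogonal_basis
    (B := g.domRestrict₁₂ S S) ⟨fun x y => hg x y⟩
  refine ⟨fun i => v (Fin.castLE hS i), ?_, fun i => ?_, hv (by simp)⟩
  · exact (v.linearIndependent.comp _ (Fin.castLE_injective hS)).map' S.subtype S.ker_subtype
  · simpa [S] using (v (Fin.castLE hS i)).2

theorem linearIndependent_nullFrame_s7 {N l : V} (hN : g N N = 0) (hl : g l l = 0)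
    (hNl : g N l = -1) (hlN : g l N = -1) {e : Fin 2 → V} (he_li : LinearIndependent K e)
    (he : ∀ i, g (e i) N = 0 ∧ g (e i) l = 0) :
    LinearIndependent K ![N, l, e 0, e 1] := by
  rw [Fintype.linearIndependent_iff]
  intro c hc
  simp only [Fin.sum_univ_four, Matrix.cons_val] at hc ⊢
  have h0 : c 0 = 0 := by simpa [hl, hNl, he] using congrArg (g · l) hc
  have h1 : c 1 = 0 := by simpa [hN, hlN, he] using congrArg (g · N) hc
  simp only [h0, h1, zero_smul, zero_add] at hc
  have h23 := Fintype.linearIndependent_iff.1 he_li ![c 2, c 3] (by simpa [Fin.sum_univ_two])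
  intro i
  fin_cases i
  exacts [h0, h1, h23 0, h23 1]

theorem exists_basis_gram_eq_nullFrameGram [Invertible (2 : K)] (hg : ∀ x y, g x y = g y x)
    (hgnd : ∀ x : V, (∀ y : V, g x y = 0) → x = 0) (hdim : finrank K V = 4) {N l : V}
    (hN : g N N = 0) (hl : g l l = 0) (hNl : g N l = -1) :
    ∃ (B : Basis (Fin 4) K V) (a d : K), a ≠ 0 ∧ d ≠ 0 ∧ B 0 = N ∧ B 1 = l ∧
      (Matrix.of fun i j => g (B i) (B j)) = nullFrameGram a d := by
  have hlN : g l N = -1 := by rw [hg]; exact hNl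
  obtain ⟨e, he_li, he, he01⟩ := exists_orthogonal_pair_orthogonal_to hg hdim.ge N l
  have he10 : g (e 1) (e 0) = 0 := by rw [hg]; exact he01
  have hli := linearIndependent_nullFrame_s7 hN hl hNl hlN he_li he
  let B := basisOfLinearIndependentOfCardEqFinrank hli (by simp [hdim])
  have hB : ⇑B = ![N, l, e 0, e 1] := coe_basisOfLinearIndependentOfCardEqFinrank _ _
  have hB_ortho (x : V) (hx : ∀ i, g x (B i) = 0) : x = 0 :=
    hgnd x fun y => LinearMap.congr_fun (B.ext (f₂ := 0) hx) y
  have he0 : g (e 0) (e 0) ≠ 0 := fun h => B.ne_zero 2 <| hB_ortho _ fun i => by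
    fin_cases i <;> simp [hB, he, h, he01]
  have he1 : g (e 1) (e 1) ≠ 0 := fun h => B.ne_zero 3 <| hB_ortho _ fun i => by
    fin_cases i <;> simp [hB, he, h, he10]
  refine ⟨B, _, _, he0, he1, by simp [hB], by simp [hB], ?_⟩
  ext i j
  fin_cases i <;> fin_cases j <;>
    simp [nullFrameGram, hB, he, he01, he10, hN, hl, hNl, hlN, hg _ (e _)]

end Frame

section Weyl

variable {V : Type*} [AddCommGroup V] [Module ℝ V] {W : V →ₗ[ℝ] V →ₗ[ℝ] V →ₗ[ℝ] V →ₗ[ℝ] ℝ}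

theorem weyl_apply_eq_zero_of_apply_right_eq_zero
    (hW1 : ∀ x y z w : V, W x y z w = - W y x z w) (hW2 : ∀ x y z w : V, W x y z w = - W x y w z)
    (hW3 : ∀ x y z w : V, W x y z w = W z w x y) {N : V} (hN : ∀ x y z : V, W x y z N = 0)
    (x y z : V) : W N x y z = 0 ∧ W x N y z = 0 ∧ W x y N z = 0 := by
  have h1 : W N x y z = 0 := by rw [hW3 N x y z, hW2 y z N x, hN, neg_zero]
  refine ⟨h1, by rw [hW1, h1, neg_zero], by rw [hW2, hN, neg_zero]⟩

theorem weyl_isAlt (hW1 : ∀ x y z w : V, W x y z w = - W y x z w) : W.IsAlt := fun x =>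
  LinearMap.ext fun z => LinearMap.ext fun w => by
    have := hW1 x x z w
    simp only [LinearMap.zero_apply]
    linarith

theorem weyl_isAlt_apply (hW2 : ∀ x y z w : V, W x y z w = - W x y w z) (x y : V) :
    (W x y).IsAlt := fun z => by
  linarith [hW2 x y z z]

theorem weyl_screen_trace {g : LinearMap.BilinForm ℝ V} (B : Basis (Fin 4) ℝ V) {a d : ℝ}
    (ha : a ≠ 0) (hd : d ≠ 0)
    (hgram : (Matrix.of fun i j => g (B i) (B j)) = nullFrameGram a d)
    (h1 : ∀ x y z : V, W (B 0) x y z = 0) (h3 : ∀ x y z : V, W x y (B 0) z = 0)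
    (htrace : ∀ x y : V, ∑ i : Fin 4, ∑ j : Fin 4,
        (Matrix.of fun i j : Fin 4 => g (B i) (B j))⁻¹ i j * W (B i) x (B j) y = 0) (x y : V) :
    a⁻¹ * W (B 2) x (B 2) y + d⁻¹ * W (B 3) x (B 3) y = 0 := by
  have := htrace x y
  rw [hgram, nullFrameGram_inv ha hd] at this
  simpa [nullFrameGram, Fin.sum_univ_four, h1, h3] using this

theorem weyl_screen_components_eq_zero
    (hW1 : ∀ x y z w : V, W x y z w = - W y x z w) (hW2 : ∀ x y z w : V, W x y z w = - W x y w z)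
    (hW3 : ∀ x y z w : V, W x y z w = W z w x y) {a d : ℝ} (ha : a ≠ 0) (hd : d ≠ 0) {e₁ e₂ : V}
    (htrace : ∀ x y : V, a⁻¹ * W e₁ x e₁ y + d⁻¹ * W e₂ x e₂ y = 0) (l : V) :
    W l e₁ e₁ e₂ = 0 ∧ W l e₂ e₁ e₂ = 0 ∧ W e₁ e₂ e₁ e₂ = 0 := by
  have hA := weyl_isAlt hW1
  have t1 := htrace e₂ l
  have t2 := htrace e₁ l
  have t3 := htrace e₂ e₂
  simp only [hA e₁, hA e₂, LinearMap.zero_apply, mul_zero, add_zero, zero_add,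
    mul_eq_zero, inv_eq_zero, ha, hd, false_or] at t1 t2 t3
  refine ⟨?_, ?_, ?_⟩
  · rw [hW3, hW2, t1, neg_zero]
  · rw [hW3, hW1, hW2, neg_neg, t2]
  · exact t3

theorem weyl_eq_zero_of_basis_components (B : Basis (Fin 4) ℝ V)
    (hW1 : ∀ x y z w : V, W x y z w = - W y x z w) (hW2 : ∀ x y z w : V, W x y z w = - W x y w z)
    (hW3 : ∀ x y z w : V, W x y z w = W z w x y) (hN : ∀ x y z : V, W x y z (B 0) = 0)
    (h1212 : W (B 1) (B 2) (B 1) (B 2) = 0) (h1213 : W (B 1) (B 2) (B 1) (B 3) = 0)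
    (h1313 : W (B 1) (B 3) (B 1) (B 3) = 0) (h1223 : W (B 1) (B 2) (B 2) (B 3) = 0)
    (h1323 : W (B 1) (B 3) (B 2) (B 3) = 0) (h2323 : W (B 2) (B 3) (B 2) (B 3) = 0) :
    W = 0 := by
  have hN' := weyl_apply_eq_zero_of_apply_right_eq_zero hW1 hW2 hW3 hN
  have h1312 : W (B 1) (B 3) (B 1) (B 2) = 0 := by rw [hW3]; exact h1213
  have h2312 : W (B 2) (B 3) (B 1) (B 2) = 0 := by rw [hW3]; exact h1223
  have h2313 : W (B 2) (B 3) (B 1) (B 3) = 0 := by rw [hW3]; exact h1323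
  refine (weyl_isAlt hW1).eq_zero_of_apply_basis_lt (P := V →ₗ[ℝ] V →ₗ[ℝ] ℝ) B fun i j hij => ?_
  refine (weyl_isAlt_apply hW2 _ _).eq_zero_of_apply_basis_lt B fun k m hkm => ?_
  fin_cases i <;> fin_cases j <;> (try simp at hij) <;> fin_cases k <;> fin_cases m <;>
    (try simp at hkm) <;> simp [hN', h1212, h1213, h1313, h1223, h1323, h2323, h1312, h2312, h2313]

end Weyl

theorem stmt7_general (V : Type*) [AddCommGroup V] [Module ℝ V]
    (hdim : Module.finrank ℝ V = 4)
    (g : V →ₗ[ℝ] V →ₗ[ℝ] ℝ)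
    (hgsym : ∀ x y : V, g x y = g y x)
    (hgnd : ∀ x : V, (∀ y : V, g x y = 0) → x = 0)
    (W : V →ₗ[ℝ] V →ₗ[ℝ] V →ₗ[ℝ] V →ₗ[ℝ] ℝ)
    (hW1 : ∀ x y z w : V, W x y z w = - W y x z w)
    (hW2 : ∀ x y z w : V, W x y z w = - W x y w z)
    (hW3 : ∀ x y z w : V, W x y z w = W z w x y)
    (htrace : ∀ (b : Module.Basis (Fin 4) ℝ V) (x y : V),
      ∑ i : Fin 4, ∑ j : Fin 4,
        (Matrix.of fun i j : Fin 4 => g (b i) (b j))⁻¹ i j * W (b i) x (b j) y = 0)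
    (N : V) (hNnull : g N N = 0)
    (l : V) (hlnull : g l l = 0) (hNl : g N l = -1)
    (hWN : ∀ x y z : V, W x y z N = 0)
    (hE : ∀ x y : V, g x N = 0 → g x l = 0 → g y N = 0 → g y l = 0 →
      W l x l y = 0) :
    ∀ x y z w : V, W x y z w = 0 := by
  obtain ⟨B, a, d, ha, hd, rfl, rfl, hgram⟩ :=
    exists_basis_gram_eq_nullFrameGram hgsym hgnd hdim hNnull hlnull hNl
  have hN := weyl_apply_eq_zero_of_apply_right_eq_zero hW1 hW2 hW3 hWN
  have hT := weyl_screen_trace B ha hd hgram (fun x y z => (hN x y z).1)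
    (fun x y z => (hN x y z).2.2) (htrace B)
  obtain ⟨h1223, h1323, h2323⟩ := weyl_screen_components_eq_zero hW1 hW2 hW3 ha hd hT (B 1)
  have hscreen : ∀ i ∈ ({2, 3} : Finset (Fin 4)), g (B i) (B 0) = 0 ∧ g (B i) (B 1) = 0 := by
    have hgB (i j : Fin 4) : g (B i) (B j) = nullFrameGram a d i j := congrFun (congrFun hgram i) j
    simp [hgB, nullFrameGram]
  have hE' (i j) (hi : i ∈ ({2, 3} : Finset (Fin 4))) (hj : j ∈ ({2, 3} : Finset (Fin 4))) :
      W (B 1) (B i) (B 1) (B j) = 0 :=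
    hE _ _ (hscreen i hi).1 (hscreen i hi).2 (hscreen j hj).1 (hscreen j hj).2
  have hW0 := weyl_eq_zero_of_basis_components B hW1 hW2 hW3 hWN (hE' 2 2 (by simp) (by simp))
    (hE' 2 3 (by simp) (by simp)) (hE' 3 3 (by simp) (by simp)) h1223 h1323 h2323
  simp [hW0]

/-- a Weyl candidate `W` annihilated by the nonzero null vector `N`
and whose components `E(x,y) = W(ℓ,x,ℓ,y)` vanish on the spacelike plane `Σ`
orthogonal to `N` and `ℓ` must vanish identically. -/
theorem stmt7 (V : Type*) [AddCommGroup V] [Module ℝ V]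
    (hdim : Module.finrank ℝ V = 4)
    (g : V →ₗ[ℝ] V →ₗ[ℝ] ℝ)
    (hgsym : ∀ x y : V, g x y = g y x)
    (hgnd : ∀ x : V, (∀ y : V, g x y = 0) → x = 0)
    (hlor : ∃ b : Module.Basis (Fin 4) ℝ V, ∀ i j : Fin 4,
      g (b i) (b j) = if i = j then (if i = 0 then (-1 : ℝ) else 1) else 0)
    (W : V →ₗ[ℝ] V →ₗ[ℝ] V →ₗ[ℝ] V →ₗ[ℝ] ℝ)
    (hW1 : ∀ x y z w : V, W x y z w = - W y x z w)
    (hW2 : ∀ x y z w : V, W x y z w = - W x y w z)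
    (hW3 : ∀ x y z w : V, W x y z w = W z w x y)
    (hBianchi : ∀ x y z w : V, W x y z w + W y z x w + W z x y w = 0)
    (htrace : ∀ (b : Module.Basis (Fin 4) ℝ V) (x y : V),
      ∑ i : Fin 4, ∑ j : Fin 4,
        (Matrix.of fun i j : Fin 4 => g (b i) (b j))⁻¹ i j * W (b i) x (b j) y = 0)
    (N : V) (hNnull : g N N = 0) (hN0 : N ≠ 0)
    (l : V) (hlnull : g l l = 0) (hNl : g N l = -1)
    (hWN : ∀ x y z : V, W x y z N = 0)
    (hE : ∀ x y : V, g x N = 0 → g x l = 0 → g y N = 0 → g y l = 0 →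
      W l x l y = 0) :
    ∀ x y z w : V, W x y z w = 0 :=
  stmt7_general V hdim g hgsym hgnd W hW1 hW2 hW3 htrace N hNnull l hlnull hNl hWN hE
end

section
/- Let V be a 4-dimensional real vector space and g a nondegenerate symmetric bilinear form on V of Lorentzian signature. Let W : V × V × V × V → ℝ be a Weyl candidate: a 4-linear map satisfying W(x,y,z,w) = −W(y,x,z,w) = −W(x,y,w,z) = W(z,w,x,y), the first Bianchi identity W(x,y,z,w) + W(y,z,x,w) + W(z,x,y,w) = 0, and vanishing g-traces (for any basis (e_i) of V with inverse-metric coefficients g^{ij}, ∑_{i,j} g^{ij} W(e_i, x, e_j, y) = 0 for all x,y ∈ V). Let N ∈ V be null and nonzero and suppose W(x,y,z,N) = 0 for all x,y,z ∈ V. Then there exists a symmetric bilinear form e on V with e(N,·) = 0 such that, writing n(x) := g(N,x), one has W(x,y,z,w) = n(x)n(z)e(y,w) − n(x)n(w)e(y,z) − n(y)n(z)e(x,w) + n(y)n(w)e(x,z) for all x,y,z,w ∈ V. -/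
/-!
Complete `N` to a null tetrad `(N, k, m₁, m₂)`: `k` null with `g(N,k) = 1`, and `m₁, m₂`
orthonormal and orthogonal to `N` and `k`; they exist because `{N, k}^⊥` lies in the spacelike
hyperplane orthogonal to the timelike basis vector. The Gram matrix of the tetrad is its own
inverse, so the trace condition reads `W(m₁,x,m₁,y) + W(m₂,x,m₂,y) = 0`. Together with the
vanishing of `W` on `N` in every slot, this makes `W(a,b,c,·) = 0` for `a, b, c ∈ N^⊥`.
Writing each argument as `x = (x - n(x) k) + n(x) k` with the first part in `N^⊥`, the only
surviving terms carry one `k` in each antisymmetric pair, which is the normal form with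
`e(x,y) = W(k,x,k,y)`.
-/

open Module

theorem LinearMap.linearIndependent_of_det_gram_ne_zero {K V ι : Type*} [Field K]
    [AddCommGroup V] [Module K V] [Fintype ι] [DecidableEq ι] (B : V →ₗ[K] V →ₗ[K] K)
    {v : ι → V} (h : (Matrix.of fun i j => B (v i) (v j)).det ≠ 0) : LinearIndependent K v := by
  rw [Fintype.linearIndependent_iff]
  intro c hc
  refine congrFun (Matrix.eq_zero_of_vecMul_eq_zero h (funext fun j => ?_))
  simpa [Matrix.vecMul, dotProduct, map_sum] using congrArg (fun x => B x (v j)) hc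

theorem LinearMap.exists_orthonormal_of_posDef {V : Type*} [AddCommGroup V] [Module ℝ V]
    (g : V →ₗ[ℝ] V →ₗ[ℝ] ℝ) (hg : ∀ x y, g x y = g y x) (T : Submodule ℝ V)
    [FiniteDimensional ℝ T] (hpos : ∀ x ∈ T, x ≠ 0 → 0 < g x x) {n : ℕ}
    (hn : finrank ℝ T = n) :
    ∃ v : Fin n → V, (∀ i, v i ∈ T) ∧ ∀ i j, g (v i) (v j) = if i = j then 1 else 0 := by
  let core : InnerProductSpace.Core ℝ T :=
    { inner x y := g x y
      conj_inner_symm x y := by simp [hg]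
      re_inner_nonneg x := by
        rcases eq_or_ne x 0 with rfl | hx
        · simp
        · exact (hpos x x.2 (by simpa using hx)).le
      add_left x y z := by simp
      smul_left x y r := by simp
      definite x hx := by
        by_contra hne
        exact (hpos x x.2 (by simpa using hne)).ne' hx }
  let : NormedAddCommGroup T := core.toNormedAddCommGroup
  let : InnerProductSpace ℝ T := .ofCore core.toCore
  let e := (stdOrthonormalBasis ℝ T).reindex (finCongr hn)
  exact ⟨fun i => e i, fun i => (e i).2, orthonormal_iff_ite.mp e.orthonormal⟩

section

variable {V : Type*} [AddCommGroup V] [Module ℝ V]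

def nullTetradGram : Matrix (Fin 4) (Fin 4) ℝ :=
  !![0, 1, 0, 0; 1, 0, 0, 0; 0, 0, 1, 0; 0, 0, 0, 1]

theorem nullTetradGram_mul_self : nullTetradGram * nullTetradGram = 1 := by
  ext i j
  fin_cases i <;> fin_cases j <;> simp [nullTetradGram, Matrix.mul_apply, Fin.sum_univ_four]

structure IsNullTetrad (g : V →ₗ[ℝ] V →ₗ[ℝ] ℝ) (N k m₁ m₂ : V) : Prop where
  NN : g N N = 0
  Nk : g N k = 1
  kk : g k k = 0
  Nm₁ : g N m₁ = 0
  Nm₂ : g N m₂ = 0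
  km₁ : g k m₁ = 0
  km₂ : g k m₂ = 0
  m₁m₁ : g m₁ m₁ = 1
  m₂m₂ : g m₂ m₂ = 1
  m₁m₂ : g m₁ m₂ = 0

namespace IsNullTetrad

variable {g : V →ₗ[ℝ] V →ₗ[ℝ] ℝ} {N k m₁ m₂ : V} (ht : IsNullTetrad g N k m₁ m₂)
  (hg : ∀ x y, g x y = g y x)
include ht hg

theorem gram_eq :
    Matrix.of (fun i j => g (![N, k, m₁, m₂] i) (![N, k, m₁, m₂] j)) = nullTetradGram := by
  ext i j
  fin_cases i <;> fin_cases j <;>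
    simp [nullTetradGram, ht.NN, ht.Nk, ht.kk, ht.Nm₁, ht.Nm₂, ht.km₁, ht.km₂, ht.m₁m₁,
      ht.m₂m₂, ht.m₁m₂, hg m₁ N, hg m₂ N, hg k N, hg m₁ k, hg m₂ k, hg m₂ m₁]

theorem linearIndependent : LinearIndependent ℝ ![N, k, m₁, m₂] :=
  g.linearIndependent_of_det_gram_ne_zero <| by
    rw [ht.gram_eq hg]
    exact (Matrix.isUnit_det_of_left_inverse nullTetradGram_mul_self).ne_zero

variable (hdim : finrank ℝ V = 4)
include hdim

noncomputable def basis : Basis (Fin 4) ℝ V :=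
  basisOfLinearIndependentOfCardEqFinrank (ht.linearIndependent hg) (by simp [hdim])

theorem coe_basis : ⇑(ht.basis hg hdim) = ![N, k, m₁, m₂] :=
  coe_basisOfLinearIndependentOfCardEqFinrank _ _

theorem eq_sum (x : V) : x = g k x • N + g N x • k + g m₁ x • m₁ + g m₂ x • m₂ := by
  obtain ⟨c, rfl⟩ : ∃ c : Fin 4 → ℝ, ∑ i, c i • ![N, k, m₁, m₂] i = x := by
    rw [← ht.coe_basis hg hdim]
    exact ⟨_, (ht.basis hg hdim).sum_repr x⟩
  simp [Fin.sum_univ_four, ht.NN, ht.Nk, ht.kk, ht.Nm₁, ht.Nm₂, ht.km₁, ht.km₂, ht.m₁m₁,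
      ht.m₂m₂, ht.m₁m₂, hg m₁ N, hg m₂ N, hg k N, hg m₁ k, hg m₂ k, hg m₂ m₁]

end IsNullTetrad

section Lorentz

variable {g : V →ₗ[ℝ] V →ₗ[ℝ] ℝ} (b : Basis (Fin 4) ℝ V)
  (hb : ∀ i j : Fin 4, g (b i) (b j) = if i = j then (if i = 0 then (-1 : ℝ) else 1) else 0)
include hb

theorem apply_eq_of_lorentzian_basis (x y : V) :
    g x y = -(b.repr x 0 * b.repr y 0) + b.repr x 1 * b.repr y 1 + b.repr x 2 * b.repr y 2
      + b.repr x 3 * b.repr y 3 := by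
  rw [← LinearMap.BilinForm.sum_repr_mul_repr_mul b x y]
  simp [Finsupp.sum_fintype, Fin.sum_univ_four, hb]

theorem pos_of_apply_basis_zero_eq_zero {x : V} (hx : g (b 0) x = 0) (hx₀ : x ≠ 0) :
    0 < g x x := by
  have h₀ : b.repr x 0 = 0 := by simpa [apply_eq_of_lorentzian_basis b hb] using hx
  rw [apply_eq_of_lorentzian_basis b hb, h₀]
  by_contra! hle
  refine hx₀ (b.ext_elem fun i => ?_)
  fin_cases i <;> simp [h₀] <;>
    nlinarith [sq_nonneg (b.repr x 1), sq_nonneg (b.repr x 2), sq_nonneg (b.repr x 3)]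

theorem exists_isNullTetrad (hg : ∀ x y, g x y = g y x) {N : V} (hNN : g N N = 0) (hN : N ≠ 0) :
    ∃ k m₁ m₂, IsNullTetrad g N k m₁ m₂ := by
  have : FiniteDimensional ℝ V := b.finiteDimensional_of_finite
  have hb₀N : g (b 0) N ≠ 0 := fun h => (pos_of_apply_basis_zero_eq_zero b hb h hN).ne' hNN
  obtain ⟨α, hα⟩ : ∃ α, α * g (b 0) N = 1 := ⟨_, inv_mul_cancel₀ hb₀N⟩
  -- the null vector in the plane of `b 0` and `N` normalized by `g N k = 1`
  set k := α • b 0 + (α ^ 2 / 2) • N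
  have hNk : g N k = 1 := by simp [k, hg N (b 0), hNN, hα]
  have hkk : g k k = 0 := by
    simp only [k, map_add, map_smul, LinearMap.add_apply, LinearMap.smul_apply, smul_eq_mul,
      hb 0 0, if_pos, hg N (b 0), hNN, mul_zero, add_zero]
    linear_combination α ^ 2 * hα
  set T := LinearMap.ker ((g N).prod (g k))
  have hT : ∀ x ∈ T, g N x = 0 ∧ g k x = 0 := fun x hx => by
    simpa [T, LinearMap.ker_prod] using hx
  have hTpos : ∀ x ∈ T, x ≠ 0 → 0 < g x x := fun x hx hx₀ => by
    refine pos_of_apply_basis_zero_eq_zero b hb ?_ hx₀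
    have := (hT x hx).2
    simp only [k, map_add, map_smul, LinearMap.add_apply, LinearMap.smul_apply, smul_eq_mul,
      (hT x hx).1, mul_zero, add_zero] at this
    exact (mul_eq_zero.mp this).resolve_left (left_ne_zero_of_mul_eq_one hα)
  have hTdim : finrank ℝ T = 2 := by
    have hsurj : Function.Surjective ((g N).prod (g k)) := fun p =>
      ⟨p.1 • k + p.2 • N, by ext <;> simp [hNk, hkk, hNN, hg k N]⟩
    have := LinearMap.finrank_range_add_finrank_ker ((g N).prod (g k))
    rw [LinearMap.range_eq_top.mpr hsurj, finrank_top, Module.finrank_prod, finrank_self,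
      finrank_eq_card_basis b, Fintype.card_fin] at this
    change 1 + 1 + finrank ℝ T = 4 at this
    omega
  obtain ⟨m, hmT, hm⟩ := g.exists_orthonormal_of_posDef hg T hTpos hTdim
  exact ⟨k, m 0, m 1, hNN, hNk, hkk, (hT _ (hmT 0)).1, (hT _ (hmT 1)).1, (hT _ (hmT 0)).2,
    (hT _ (hmT 1)).2, by simpa using hm 0 0, by simpa using hm 1 1, by simpa using hm 0 1⟩

end Lorentz

structure IsBiskewPairSymmetric (W : V →ₗ[ℝ] V →ₗ[ℝ] V →ₗ[ℝ] V →ₗ[ℝ] ℝ) : Prop where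
  skew_left : ∀ x y z w, W x y z w = -W y x z w
  skew_right : ∀ x y z w, W x y z w = -W x y w z
  pair_symm : ∀ x y z w, W x y z w = W z w x y

namespace IsBiskewPairSymmetric

variable {W : V →ₗ[ℝ] V →ₗ[ℝ] V →ₗ[ℝ] V →ₗ[ℝ] ℝ} (hW : IsBiskewPairSymmetric W)
include hW

theorem apply_self_left (x z w : V) : W x x z w = 0 := by
  linarith [hW.skew_left x x z w]

theorem apply_self_right (x y z : V) : W x y z z = 0 := by
  linarith [hW.skew_right x y z z]

theorem apply_add_smul (S : Submodule ℝ V) (hS : ∀ a ∈ S, ∀ b ∈ S, ∀ c ∈ S, ∀ d, W a b c d = 0)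
    (k : V) {p₁ p₂ p₃ p₄ : V} (h₁ : p₁ ∈ S) (h₂ : p₂ ∈ S) (h₃ : p₃ ∈ S) (h₄ : p₄ ∈ S)
    (a₁ a₂ a₃ a₄ : ℝ) :
    W (p₁ + a₁ • k) (p₂ + a₂ • k) (p₃ + a₃ • k) (p₄ + a₄ • k) =
      a₁ * a₃ * W k p₂ k p₄ - a₁ * a₄ * W k p₂ k p₃
        - a₂ * a₃ * W k p₁ k p₄ + a₂ * a₄ * W k p₁ k p₃ := by
  have h₁₂₃ : ∀ q, W p₁ p₂ p₃ q = 0 := hS p₁ h₁ p₂ h₂ p₃ h₃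
  have h₁₂₄ : W p₁ p₂ k p₄ = 0 := by rw [hW.skew_right, hS p₁ h₁ p₂ h₂ p₄ h₄, neg_zero]
  have h₁₃₄ : W p₁ k p₃ p₄ = 0 := by rw [hW.pair_symm, hS p₃ h₃ p₄ h₄ p₁ h₁]
  have h₂₃₄ : W k p₂ p₃ p₄ = 0 := by
    rw [hW.pair_symm, hW.skew_right, hS p₃ h₃ p₄ h₄ p₂ h₂, neg_zero]
  have hk₁₄ : W k p₂ p₃ k = -W k p₂ k p₃ := hW.skew_right _ _ _ _
  have hk₂₃ : W p₁ k k p₄ = -W k p₁ k p₄ := hW.skew_left _ _ _ _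
  have hk₂₄ : W p₁ k p₃ k = W k p₁ k p₃ := by rw [hW.skew_left, hW.skew_right, neg_neg]
  simp only [map_add, map_smul, LinearMap.add_apply, LinearMap.smul_apply, smul_eq_mul,
    hW.apply_self_left, hW.apply_self_right, h₁₂₃, h₁₂₄, h₁₃₄, h₂₃₄, hk₁₄, hk₂₃, hk₂₄]
  ring

variable {N : V} (hN : ∀ x y z, W x y z N = 0)
include hN

theorem apply_third_eq_zero (x y w : V) : W x y N w = 0 := by
  rw [hW.skew_right, hN, neg_zero]

theorem apply_first_eq_zero (y z w : V) : W N y z w = 0 := by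
  rw [hW.pair_symm, hW.apply_third_eq_zero hN]

theorem apply_second_eq_zero (x z w : V) : W x N z w = 0 := by
  rw [hW.skew_left, hW.apply_first_eq_zero hN, neg_zero]

variable {g : V →ₗ[ℝ] V →ₗ[ℝ] ℝ} (hg : ∀ x y, g x y = g y x) (hdim : finrank ℝ V = 4)
  {k m₁ m₂ : V} (ht : IsNullTetrad g N k m₁ m₂)
include hg hdim ht

theorem trace_eq_zero
    (htrace : ∀ (b : Basis (Fin 4) ℝ V) (x y : V), ∑ i : Fin 4, ∑ j : Fin 4,
      (Matrix.of fun i j : Fin 4 => g (b i) (b j))⁻¹ i j * W (b i) x (b j) y = 0)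
    (x y : V) : W m₁ x m₁ y + W m₂ x m₂ y = 0 := by
  have h := htrace (ht.basis hg hdim) x y
  rw [ht.coe_basis hg hdim, ht.gram_eq hg, Matrix.inv_eq_left_inv nullTetradGram_mul_self] at h
  simpa [Fin.sum_univ_four, nullTetradGram, hW.apply_first_eq_zero hN,
    hW.apply_third_eq_zero hN] using h

variable (htr : ∀ x y, W m₁ x m₁ y + W m₂ x m₂ y = 0)
include htr

theorem apply_eq_zero_of_mem_ker :
    ∀ a ∈ LinearMap.ker (g N), ∀ b ∈ LinearMap.ker (g N), ∀ c ∈ LinearMap.ker (g N),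
      ∀ d, W a b c d = 0 := by
  have hker : ∀ a ∈ LinearMap.ker (g N), a = g k a • N + g m₁ a • m₁ + g m₂ a • m₂ := by
    intro a ha
    rw [LinearMap.mem_ker] at ha
    conv_lhs => rw [ht.eq_sum hg hdim a, ha, zero_smul, add_zero]
  have hm₁ : ∀ d, W m₁ m₂ m₁ d = 0 := fun d => by
    linarith [hW.pair_symm m₁ m₂ m₁ d, htr d m₂, hW.apply_self_right m₂ d m₂]
  have hm₂ : ∀ d, W m₁ m₂ m₂ d = 0 := fun d => by
    linarith [hW.pair_symm m₁ m₂ m₂ d, hW.skew_right m₂ d m₁ m₂, htr d m₁,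
      hW.apply_self_right m₁ d m₁]
  intro a ha b hb c hc d
  rw [hker a ha, hker b hb, hker c hc]
  simp [hW.apply_first_eq_zero hN, hW.apply_second_eq_zero hN, hW.apply_third_eq_zero hN,
    hW.apply_self_left, hm₁, hm₂, hW.skew_left m₂ m₁]

theorem eq_of_isNullTetrad (x y z w : V) :
    W x y z w = g N x * g N z * W k y k w - g N x * g N w * W k y k z
      - g N y * g N z * W k x k w + g N y * g N w * W k x k z := by
  have hp : ∀ x, x - g N x • k ∈ LinearMap.ker (g N) := fun x => by simp [ht.Nk]
  have hW' : ∀ x y, W k (x - g N x • k) k (y - g N y • k) = W k x k y := fun x y => by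
    simp [hW.apply_self_left, hW.apply_self_right]
  calc W x y z w = W (x - g N x • k + g N x • k) (y - g N y • k + g N y • k)
        (z - g N z • k + g N z • k) (w - g N w • k + g N w • k) := by simp only [sub_add_cancel]
    _ = _ := hW.apply_add_smul _ (hW.apply_eq_zero_of_mem_ker hN hg hdim ht htr) k
        (hp x) (hp y) (hp z) (hp w) _ _ _ _
    _ = _ := by simp only [hW']

end IsBiskewPairSymmetric

end

theorem stmt8_general (V : Type*) [AddCommGroup V] [Module ℝ V]
    (hdim : Module.finrank ℝ V = 4)
    (g : V →ₗ[ℝ] V →ₗ[ℝ] ℝ)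
    (hgsym : ∀ x y : V, g x y = g y x)
    (hlor : ∃ b : Module.Basis (Fin 4) ℝ V, ∀ i j : Fin 4,
      g (b i) (b j) = if i = j then (if i = 0 then (-1 : ℝ) else 1) else 0)
    (W : V →ₗ[ℝ] V →ₗ[ℝ] V →ₗ[ℝ] V →ₗ[ℝ] ℝ)
    (hW1 : ∀ x y z w : V, W x y z w = - W y x z w)
    (hW2 : ∀ x y z w : V, W x y z w = - W x y w z)
    (hW3 : ∀ x y z w : V, W x y z w = W z w x y)
    (htrace : ∀ (b : Module.Basis (Fin 4) ℝ V) (x y : V),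
      ∑ i : Fin 4, ∑ j : Fin 4,
        (Matrix.of fun i j : Fin 4 => g (b i) (b j))⁻¹ i j * W (b i) x (b j) y = 0)
    (N : V) (hNnull : g N N = 0) (hN0 : N ≠ 0)
    (hWN : ∀ x y z : V, W x y z N = 0) :
    ∃ e : V →ₗ[ℝ] V →ₗ[ℝ] ℝ,
      (∀ x y : V, e x y = e y x) ∧ (∀ y : V, e N y = 0) ∧
      ∀ x y z w : V, W x y z w =
        g N x * g N z * e y w - g N x * g N w * e y z
        - g N y * g N z * e x w + g N y * g N w * e x z := by
  obtain ⟨b, hb⟩ := hlor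
  obtain ⟨k, m₁, m₂, ht⟩ := exists_isNullTetrad b hb hgsym hNnull hN0
  have hW : IsBiskewPairSymmetric W := ⟨hW1, hW2, hW3⟩
  have htr := hW.trace_eq_zero hWN hgsym hdim ht htrace
  exact ⟨(W k).flip k, fun x y => hW.pair_symm k x k y,
    fun y => hW.apply_second_eq_zero hWN k k y, hW.eq_of_isNullTetrad hWN hgsym hdim ht htr⟩

/-- algebraic normal form of a Weyl candidate annihilated by a nonzero
null vector `N`: with `n(x) := g(N,x)`, there is a symmetric bilinear form `e`
annihilated by `N` such that
`W(x,y,z,w) = n(x)n(z)e(y,w) − n(x)n(w)e(y,z) − n(y)n(z)e(x,w) + n(y)n(w)e(x,z)`. -/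
theorem stmt8 (V : Type*) [AddCommGroup V] [Module ℝ V]
    (hdim : Module.finrank ℝ V = 4)
    (g : V →ₗ[ℝ] V →ₗ[ℝ] ℝ)
    (hgsym : ∀ x y : V, g x y = g y x)
    (hgnd : ∀ x : V, (∀ y : V, g x y = 0) → x = 0)
    (hlor : ∃ b : Module.Basis (Fin 4) ℝ V, ∀ i j : Fin 4,
      g (b i) (b j) = if i = j then (if i = 0 then (-1 : ℝ) else 1) else 0)
    (W : V →ₗ[ℝ] V →ₗ[ℝ] V →ₗ[ℝ] V →ₗ[ℝ] ℝ)
    (hW1 : ∀ x y z w : V, W x y z w = - W y x z w)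
    (hW2 : ∀ x y z w : V, W x y z w = - W x y w z)
    (hW3 : ∀ x y z w : V, W x y z w = W z w x y)
    (hBianchi : ∀ x y z w : V, W x y z w + W y z x w + W z x y w = 0)
    (htrace : ∀ (b : Module.Basis (Fin 4) ℝ V) (x y : V),
      ∑ i : Fin 4, ∑ j : Fin 4,
        (Matrix.of fun i j : Fin 4 => g (b i) (b j))⁻¹ i j * W (b i) x (b j) y = 0)
    (N : V) (hNnull : g N N = 0) (hN0 : N ≠ 0)
    (hWN : ∀ x y z : V, W x y z N = 0) :
    ∃ e : V →ₗ[ℝ] V →ₗ[ℝ] ℝ,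
      (∀ x y : V, e x y = e y x) ∧ (∀ y : V, e N y = 0) ∧
      ∀ x y z w : V, W x y z w =
        g N x * g N z * e y w - g N x * g N w * e y z
        - g N y * g N z * e x w + g N y * g N w * e x z :=
  stmt8_general V hdim g hgsym hlor W hW1 hW2 hW3 htrace N hNnull hN0 hWN
end
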